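/- For a matrix A with restricted isometry constant δ_T and any index set 𝒯 with |𝒯| ≤ T, for all vectors x of dimension |𝒯| one has (1−δ_T)‖x‖ ≤ ‖A_𝒯* A_𝒯 x‖ ≤ (1+δ_T)‖x‖, and consequently (1/(1+δ_T))‖x‖ ≤ ‖(A_𝒯* A_𝒯)^{-1} x‖ ≤ (1/(1−δ_T))‖x‖. -/

import Mathlib

open Matrix Finset

/-- Euclidean (ℓ2) norm of a finitely-indexed real vector. -/
noncomputable def enorm2 {ι : Type*} [Fintype ι] (x : ι → ℝ) : ℝ :=
  Real.sqrt (∑ i, x i ^ 2)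

/-- `x` is `T`-sparse: it has at most `T` nonzero entries. -/
def sparse {N : ℕ} (T : ℕ) (x : Fin N → ℝ) : Prop :=
  (Finset.univ.filter (fun i => x i ≠ 0)).card ≤ T

/-- Support of a vector as a finset. -/
noncomputable def fsupp {N : ℕ} (x : Fin N → ℝ) : Finset (Fin N) :=
  Finset.univ.filter (fun i => x i ≠ 0)

/-- Restricted isometry property with constant `δ` at sparsity level `T`. -/
def RIP {M N : ℕ} (A : Matrix (Fin M) (Fin N) ℝ) (T : ℕ) (δ : ℝ) : Prop :=
  ∀ x : Fin N → ℝ, sparse T x →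
    (1 - δ) * enorm2 x ^ 2 ≤ enorm2 (A.mulVec x) ^ 2 ∧
    enorm2 (A.mulVec x) ^ 2 ≤ (1 + δ) * enorm2 x ^ 2

/-- Column submatrix of `A` indexed by the finset `𝒯`. -/
def cols {M N : ℕ} (A : Matrix (Fin M) (Fin N) ℝ) (𝒯 : Finset (Fin N)) :
    Matrix (Fin M) 𝒯 ℝ := A.submatrix id (fun i => (i : Fin N))

/-- Pseudo-inverse `(Bᵀ B)⁻¹ Bᵀ` (full column rank assumed where used). -/
noncomputable def pinv {M : ℕ} {ι : Type*} [Fintype ι] [DecidableEq ι]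
    (B : Matrix (Fin M) ι ℝ) : Matrix ι (Fin M) ℝ := (Bᵀ * B)⁻¹ * Bᵀ

/-- `x` restricted to the index set `S` (zero off `S`). -/
def restr {N : ℕ} (x : Fin N → ℝ) (S : Finset (Fin N)) : Fin N → ℝ :=
  fun i => if i ∈ S then x i else 0

/-- Zero-pad a vector indexed by `S` to a full-length vector. -/
noncomputable def scatter {N : ℕ} (S : Finset (Fin N)) (v : S → ℝ) : Fin N → ℝ :=
  fun i => if h : i ∈ S then v ⟨i, h⟩ else 0

/-
Restricted to the columns in `𝒯`, the RIP says that the quadratic form of the Gram matrix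
`G = A_𝒯ᵀ A_𝒯` lies within `δ‖x‖²` of `‖x‖²`. As `G - 1` is symmetric, its operator norm is the
supremum of its Rayleigh quotient, so `‖(G - 1) x‖ ≤ δ‖x‖`, and the triangle inequality gives
`|‖G x‖ - ‖x‖| ≤ δ‖x‖`. For `δ < 1` the lower bound makes `G` injective, hence invertible, and
the bounds for `G⁻¹` follow by applying those for `G` to `G⁻¹ x`.
-/

open scoped InnerProductSpace

theorem ContinuousLinearMap.norm_le_of_abs_re_inner_self_le {𝕜 E : Type*} [RCLike 𝕜]
    [NormedAddCommGroup E] [InnerProductSpace 𝕜 E] {T : E →L[𝕜] E}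
    (hT : (T : E →ₗ[𝕜] E).IsSymmetric) {c : ℝ} (hc : 0 ≤ c)
    (h : ∀ x, |RCLike.re ⟪T x, x⟫_𝕜| ≤ c * ‖x‖ ^ 2) : ‖T‖ ≤ c := by
  rw [T.norm_eq_iSup_rayleighQuotient hT]
  refine ciSup_le fun x => ?_
  rcases eq_or_ne x 0 with rfl | hx
  · simpa using hc
  · rw [rayleighQuotient, reApplyInnerSelf_apply, abs_div, abs_sq, div_le_iff₀ (by positivity)]
    exact h x

theorem enorm2_eq_norm_toLp {ι : Type*} [Fintype ι] (x : ι → ℝ) :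
    enorm2 x = ‖WithLp.toLp 2 x‖ := by
  simp [enorm2, EuclideanSpace.norm_eq]

theorem enorm2_sq {ι : Type*} [Fintype ι] (x : ι → ℝ) : enorm2 x ^ 2 = x ⬝ᵥ x := by
  rw [enorm2, Real.sq_sqrt (by positivity)]
  simp [dotProduct, sq]

theorem enorm2_eq_zero {ι : Type*} [Fintype ι] {x : ι → ℝ} : enorm2 x = 0 ↔ x = 0 := by
  rw [enorm2_eq_norm_toLp, norm_eq_zero, WithLp.toLp_eq_zero]

theorem sum_apply_scatter {N : ℕ} (S : Finset (Fin N)) (v : S → ℝ) (f : Fin N → ℝ → ℝ)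
    (hf : ∀ j, f j 0 = 0) : ∑ j, f j (scatter S v j) = ∑ i : S, f i (v i) := by
  rw [← Finset.sum_subset S.subset_univ fun j _ hj => by simp [scatter, hj, hf],
    ← Finset.sum_coe_sort S]
  exact Finset.sum_congr rfl fun i _ => by simp [scatter, i.2]

theorem mulVec_scatter {M N : ℕ} (A : Matrix (Fin M) (Fin N) ℝ) (S : Finset (Fin N))
    (v : S → ℝ) : A *ᵥ scatter S v = cols A S *ᵥ v := by
  funext m
  exact sum_apply_scatter S v (fun j t => A m j * t) fun j => mul_zero _

theorem enorm2_scatter {N : ℕ} (S : Finset (Fin N)) (v : S → ℝ) :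
    enorm2 (scatter S v) = enorm2 v :=
  congrArg Real.sqrt (sum_apply_scatter S v (fun _ t => t ^ 2) fun _ => zero_pow two_ne_zero)

theorem sparse_scatter {N T : ℕ} {S : Finset (Fin N)} (hS : S.card ≤ T) (v : S → ℝ) :
    sparse T (scatter S v) := by
  refine (Finset.card_le_card fun i hi => ?_).trans hS
  by_contra hiS
  simp [scatter, hiS] at hi

theorem RIP.cols_mulVec_bounds {M N T : ℕ} {A : Matrix (Fin M) (Fin N) ℝ} {δ : ℝ} (hA : RIP A T δ)
    {𝒯 : Finset (Fin N)} (hcard : 𝒯.card ≤ T) (v : 𝒯 → ℝ) :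
    (1 - δ) * enorm2 v ^ 2 ≤ enorm2 (cols A 𝒯 *ᵥ v) ^ 2 ∧
      enorm2 (cols A 𝒯 *ᵥ v) ^ 2 ≤ (1 + δ) * enorm2 v ^ 2 := by
  simpa only [mulVec_scatter, enorm2_scatter] using hA (scatter 𝒯 v) (sparse_scatter hcard v)

namespace Matrix

theorem dotProduct_transpose_mul_self_mulVec {ι m : Type*} [Fintype ι] [Fintype m]
    (B : Matrix m ι ℝ) (v : ι → ℝ) : v ⬝ᵥ (Bᵀ * B) *ᵥ v = enorm2 (B *ᵥ v) ^ 2 := by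
  rw [enorm2_sq, ← mulVec_mulVec, dotProduct_mulVec, vecMul_transpose]

variable {ι : Type*} [Fintype ι] [DecidableEq ι]

theorem IsHermitian.enorm2_mulVec_le {H : Matrix ι ι ℝ} (hH : H.IsHermitian) {c : ℝ}
    (hc : 0 ≤ c) (h : ∀ v, |v ⬝ᵥ H *ᵥ v| ≤ c * enorm2 v ^ 2) (v : ι → ℝ) :
    enorm2 (H *ᵥ v) ≤ c * enorm2 v := by
  have hnorm : ‖toEuclideanCLM (𝕜 := ℝ) H‖ ≤ c := by
    refine ContinuousLinearMap.norm_le_of_abs_re_inner_self_le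
      (isSymmetric_toEuclideanLin_iff.mpr hH) hc fun x => ?_
    rw [RCLike.re_to_real, real_inner_comm, inner_toEuclideanCLM]
    simpa only [enorm2_eq_norm_toLp, WithLp.toLp_ofLp] using h x.ofLp
  rw [enorm2_eq_norm_toLp, enorm2_eq_norm_toLp, ← toEuclideanCLM_toLp]
  exact (ContinuousLinearMap.le_opNorm _ _).trans (by gcongr)

theorem IsHermitian.enorm2_mulVec_bounds {G : Matrix ι ι ℝ} (hG : G.IsHermitian) {δ : ℝ}
    (hδ : 0 ≤ δ) (h : ∀ v, |v ⬝ᵥ G *ᵥ v - enorm2 v ^ 2| ≤ δ * enorm2 v ^ 2) (v : ι → ℝ) :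
    (1 - δ) * enorm2 v ≤ enorm2 (G *ᵥ v) ∧ enorm2 (G *ᵥ v) ≤ (1 + δ) * enorm2 v := by
  have hdev : enorm2 ((G - 1) *ᵥ v) ≤ δ * enorm2 v := by
    refine (hG.sub isHermitian_one).enorm2_mulVec_le hδ (fun w => ?_) v
    rw [sub_mulVec, one_mulVec, dotProduct_sub, ← enorm2_sq]
    exact h w
  have htri : |enorm2 (G *ᵥ v) - enorm2 v| ≤ enorm2 ((G - 1) *ᵥ v) := by
    simpa only [enorm2_eq_norm_toLp, sub_mulVec, one_mulVec, WithLp.toLp_sub]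
      using abs_norm_sub_norm_le (WithLp.toLp 2 (G *ᵥ v)) (WithLp.toLp 2 v)
  constructor <;> linarith [abs_le.mp (htri.trans hdev)]

theorem enorm2_inv_mulVec_bounds {G : Matrix ι ι ℝ} {a b : ℝ} (ha : 0 < a) (hb : 0 < b)
    (h : ∀ v, a * enorm2 v ≤ enorm2 (G *ᵥ v) ∧ enorm2 (G *ᵥ v) ≤ b * enorm2 v) (x : ι → ℝ) :
    1 / b * enorm2 x ≤ enorm2 (G⁻¹ *ᵥ x) ∧ enorm2 (G⁻¹ *ᵥ x) ≤ 1 / a * enorm2 x := by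
  have hinj : Function.Injective G.mulVec := by
    refine (injective_iff_map_eq_zero G.mulVecLin).mpr fun v hv => enorm2_eq_zero.mp ?_
    have hav := (h v).1
    rw [← mulVecLin_apply, hv, enorm2_eq_zero.mpr rfl] at hav
    exact le_antisymm (nonpos_of_mul_nonpos_right hav ha) (Real.sqrt_nonneg _)
  have hG : IsUnit G.det := (isUnit_iff_isUnit_det G).mp (mulVec_injective_iff_isUnit.mp hinj)
  have hx : G *ᵥ (G⁻¹ *ᵥ x) = x := by rw [mulVec_mulVec, mul_nonsing_inv G hG, one_mulVec]
  obtain ⟨hlower, hupper⟩ := h (G⁻¹ *ᵥ x)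
  rw [hx] at hlower hupper
  rw [one_div_mul_eq_div, one_div_mul_eq_div, div_le_iff₀ hb, le_div_iff₀ ha]
  constructor <;> linarith

end Matrix

theorem stmt2 {M N T : ℕ} (A : Matrix (Fin M) (Fin N) ℝ) (δ : ℝ)
    (hδ0 : 0 ≤ δ) (hδ1 : δ < 1) (hRIP : RIP A T δ)
    (𝒯 : Finset (Fin N)) (hcard : 𝒯.card ≤ T) :
    ∀ x : 𝒯 → ℝ,
      ((1 - δ) * enorm2 x ≤ enorm2 (((cols A 𝒯)ᵀ * cols A 𝒯).mulVec x) ∧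
        enorm2 (((cols A 𝒯)ᵀ * cols A 𝒯).mulVec x) ≤ (1 + δ) * enorm2 x) ∧
      ((1 / (1 + δ)) * enorm2 x ≤ enorm2 ((((cols A 𝒯)ᵀ * cols A 𝒯)⁻¹).mulVec x) ∧
        enorm2 ((((cols A 𝒯)ᵀ * cols A 𝒯)⁻¹).mulVec x) ≤ (1 / (1 - δ)) * enorm2 x) := by
  have hgram : ((cols A 𝒯)ᵀ * cols A 𝒯).IsHermitian := by
    simpa using isHermitian_conjTranspose_mul_self (cols A 𝒯)
  have hbounds := hgram.enorm2_mulVec_bounds hδ0 fun v => by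
    rw [dotProduct_transpose_mul_self_mulVec, abs_sub_le_iff]
    constructor <;> linarith [hRIP.cols_mulVec_bounds hcard v]
  exact fun x => ⟨hbounds x, enorm2_inv_mulVec_bounds (by linarith) (by linarith) hbounds x⟩
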